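/- Let 𝒳 = (Ω,S) be a thick coherent configuration. Then every basis relation s ∈ S can be written as a composition s = s_1·s_2·⋯·s_k of irredundant basis relations s_1,…,s_k ∈ S. -/

import Mathlib

open Set

def rcomp {Ω : Type*} (r s : Set (Ω × Ω)) : Set (Ω × Ω) :=
  {p | ∃ γ, (p.1, γ) ∈ r ∧ (γ, p.2) ∈ s}

def rconv {Ω : Type*} (r : Set (Ω × Ω)) : Set (Ω × Ω) := {p | (p.2, p.1) ∈ r}

def rdiag (Ω : Type*) : Set (Ω × Ω) := {p | p.1 = p.2}

def IsEquivRel {Ω : Type*} (e : Set (Ω × Ω)) : Prop :=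
  Equivalence (fun a b => (a, b) ∈ e)

/-- The smallest equivalence relation containing `r`. -/
def eqvClosure {Ω : Type*} (r : Set (Ω × Ω)) : Set (Ω × Ω) :=
  ⋂₀ {e | IsEquivRel e ∧ r ⊆ e}

/-- Join of two equivalence relations. -/
def rjoin {Ω : Type*} (e f : Set (Ω × Ω)) : Set (Ω × Ω) := eqvClosure (e ∪ f)

def IsClass {Ω : Type*} (e : Set (Ω × Ω)) (Δ : Set Ω) : Prop :=
  ∃ α, Δ = {β | (α, β) ∈ e}

def setoidRel {Ω : Type*} (e : Setoid Ω) : Set (Ω × Ω) := {p | e.r p.1 p.2}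

/-- The relation induced on the quotient `Ω/e` by a relation `r` on `Ω`. -/
def qmap {Ω : Type*} (e : Setoid Ω) (r : Set (Ω × Ω)) :
    Set (Quotient e × Quotient e) :=
  {p | ∃ a b : Ω, Quotient.mk e a = p.1 ∧ Quotient.mk e b = p.2 ∧ (a, b) ∈ r}

/-- Tensor product of relations. -/
def tensorRel {m : ℕ} {Ω : Fin m → Type*} (s : ∀ i, Set (Ω i × Ω i)) :
    Set ((∀ i, Ω i) × (∀ i, Ω i)) :=
  {p | ∀ i, (p.1 i, p.2 i) ∈ s i}

def tensor2 {Ω₁ Ω₂ : Type*} (s₁ : Set (Ω₁ × Ω₁)) (s₂ : Set (Ω₂ × Ω₂)) :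
    Set ((Ω₁ × Ω₂) × (Ω₁ × Ω₂)) :=
  {p | (p.1.1, p.2.1) ∈ s₁ ∧ (p.1.2, p.2.2) ∈ s₂}

/-- `PP e I` is the join of the equivalence relations `e i`, `i ∈ I`. -/
def PP {Ω : Type*} {m : ℕ} (e : Fin m → Set (Ω × Ω)) (I : Set (Fin m)) :
    Set (Ω × Ω) :=
  eqvClosure (⋃ i ∈ I, e i)

/-- An atomic Cartesian decomposition, given as a family of equivalence relations. -/
def IsACDfam {Ω : Type*} {m : ℕ} (e : Fin m → Set (Ω × Ω)) : Prop :=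
  0 < m ∧ (∀ i, IsEquivRel (e i)) ∧ (∀ i, e i ≠ rdiag Ω) ∧
  (∀ i j, rcomp (e i) (e j) = rcomp (e j) (e i)) ∧
  (∀ i, e i ∩ PP e ({i}ᶜ) = rdiag Ω) ∧
  (∀ i, rjoin (e i) (PP e ({i}ᶜ)) = Set.univ)

/-- Join of a set of relations. -/
def joinAll {Ω : Type*} (B : Set (Set (Ω × Ω))) : Set (Ω × Ω) := eqvClosure (⋃₀ B)

/-- The `P`-complement of `e`: the join of the members of `P` other than `e`. -/
def pcompl {Ω : Type*} (P : Set (Set (Ω × Ω))) (e : Set (Ω × Ω)) : Set (Ω × Ω) :=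
  joinAll (P \ {e})

/-- An atomic Cartesian decomposition, given as a set of equivalence relations. -/
def IsACD {Ω : Type*} (P : Set (Set (Ω × Ω))) : Prop :=
  P.Nonempty ∧ (∀ e ∈ P, IsEquivRel e ∧ e ≠ rdiag Ω) ∧
  (∀ e ∈ P, ∀ f ∈ P, rcomp e f = rcomp f e) ∧
  (∀ e ∈ P, e ∩ pcompl P e = rdiag Ω ∧ rjoin e (pcompl P e) = Set.univ)

def IsPartitionOf {α : Type*} (P : Set α) (C : Set (Set α)) : Prop :=
  (∀ B ∈ C, B.Nonempty) ∧ (∀ B ∈ C, ∀ B' ∈ C, B ≠ B' → Disjoint B B') ∧ ⋃₀ C = P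

/-- A coherent configuration on `Ω`. -/
structure CohCfg (Ω : Type*) where
  S : Set (Set (Ω × Ω))
  empty_not_mem : ∅ ∉ S
  cover : ∀ p : Ω × Ω, ∃ s ∈ S, p ∈ s
  pairwise_disjoint : ∀ s ∈ S, ∀ t ∈ S, s ≠ t → Disjoint s t
  diag_union : ∀ s ∈ S, (s ∩ rdiag Ω).Nonempty → s ⊆ rdiag Ω
  conv_mem : ∀ s ∈ S, rconv s ∈ S
  inter_const : ∀ r ∈ S, ∀ s ∈ S, ∀ t ∈ S, ∀ p ∈ t, ∀ q ∈ t,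
    ({γ : Ω | (p.1, γ) ∈ r ∧ (γ, p.2) ∈ s}).ncard
      = ({γ : Ω | (q.1, γ) ∈ r ∧ (γ, q.2) ∈ s}).ncard

/-- The valency of a basis relation (the common size of the rows over the left support). -/
noncomputable def valency {Ω : Type*} (s : Set (Ω × Ω)) : ℕ :=
  sSup ((fun α => ({β | (α, β) ∈ s} : Set Ω).ncard) '' {α | ∃ β, (α, β) ∈ s})

def IsThick {Ω : Type*} (X : CohCfg Ω) : Prop :=
  ∀ s ∈ X.S, Disjoint s (rdiag Ω) → ¬(valency s = 1 ∧ valency (rconv s) = 1)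

def IsParabolic {Ω : Type*} (X : CohCfg Ω) (e : Set (Ω × Ω)) : Prop :=
  IsEquivRel e ∧ ∀ s ∈ X.S, (s ∩ e).Nonempty → s ⊆ e

def Perp {Ω : Type*} (X : CohCfg Ω) (e f : Set (Ω × Ω)) : Prop :=
  ∀ x ∈ X.S, x ⊆ e → ∀ y ∈ X.S, y ⊆ f → (rcomp x y).Nonempty → rcomp x y ∈ X.S

def Redundant {Ω : Type*} (X : CohCfg Ω) (s : Set (Ω × Ω)) : Prop :=
  ∃ x ∈ X.S, ∃ y ∈ X.S, Disjoint x (rdiag Ω) ∧ Disjoint y (rdiag Ω) ∧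
    s = rcomp x y ∧ eqvClosure x ∩ eqvClosure y = rdiag Ω

/-! Induct on `valency s * valency sᵀ`. If `s = x · y` with `⟨x⟩ ∧ ⟨y⟩ = 1`, the middle point of
each pair of `s` is unique, so valencies multiply along the factorization, for `s` and for its
converse `yᵀ · xᵀ`. Thickness makes the measure of an irreflexive basis relation at least `2`, hence
both factors have strictly smaller measure. -/

section Relations

variable {Ω : Type*}

lemma isEquivRel_eqvClosure (r : Set (Ω × Ω)) : IsEquivRel (eqvClosure r) where
  refl _ _ he := he.1.refl _
  symm h e he := he.1.symm (h e he)
  trans h₁ h₂ e he := he.1.trans (h₁ e he) (h₂ e he)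

lemma subset_eqvClosure (r : Set (Ω × Ω)) : r ⊆ eqvClosure r :=
  fun _ hp _ he => he.2 hp

lemma eqvClosure_subset {r e : Set (Ω × Ω)} (he : IsEquivRel e) (hre : r ⊆ e) :
    eqvClosure r ⊆ e :=
  fun _ hp => hp e ⟨he, hre⟩

lemma eqvClosure_rconv (r : Set (Ω × Ω)) : eqvClosure (rconv r) = eqvClosure r := by
  have key (t : Set (Ω × Ω)) : eqvClosure (rconv t) ⊆ eqvClosure t :=
    eqvClosure_subset (isEquivRel_eqvClosure t)
      fun _ hp => (isEquivRel_eqvClosure t).symm (subset_eqvClosure t hp)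
  exact (key r).antisymm (key (rconv r))

lemma rcomp_assoc (a b c : Set (Ω × Ω)) :
    rcomp (rcomp a b) c = rcomp a (rcomp b c) := by
  ext p
  exact ⟨fun ⟨γ, ⟨δ, h₁, h₂⟩, h₃⟩ => ⟨δ, h₁, γ, h₂, h₃⟩,
    fun ⟨δ, h₁, γ, h₂, h₃⟩ => ⟨γ, ⟨δ, h₁, h₂⟩, h₃⟩⟩

lemma rcomp_rdiag (a : Set (Ω × Ω)) : rcomp a (rdiag Ω) = a := by
  ext ⟨α, β⟩
  exact ⟨fun ⟨_, h, (hγ : _ = β)⟩ => hγ ▸ h, fun h => ⟨β, h, rfl⟩⟩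

lemma rdiag_rcomp (a : Set (Ω × Ω)) : rcomp (rdiag Ω) a = a := by
  ext ⟨α, β⟩
  exact ⟨fun ⟨_, (hγ : α = _), h⟩ => hγ ▸ h, fun h => ⟨α, rfl, h⟩⟩

lemma rconv_rcomp (a b : Set (Ω × Ω)) :
    rconv (rcomp a b) = rcomp (rconv b) (rconv a) := by
  ext
  exact ⟨fun ⟨γ, h₁, h₂⟩ => ⟨γ, h₂, h₁⟩, fun ⟨γ, h₁, h₂⟩ => ⟨γ, h₂, h₁⟩⟩

lemma foldr_rcomp_append (l₁ l₂ : List (Set (Ω × Ω))) :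
    (l₁ ++ l₂).foldr rcomp (rdiag Ω)
      = rcomp (l₁.foldr rcomp (rdiag Ω)) (l₂.foldr rcomp (rdiag Ω)) := by
  induction l₁ with
  | nil => simp [rdiag_rcomp]
  | cons a l ih => simp [ih, rcomp_assoc]

lemma eq_of_mem_of_eqvClosure_inter_eq_rdiag {x y : Set (Ω × Ω)}
    (h : eqvClosure x ∩ eqvClosure y = rdiag Ω) {α β β' γ : Ω}
    (hx : (α, β) ∈ x) (hy : (β, γ) ∈ y) (hx' : (α, β') ∈ x) (hy' : (β', γ) ∈ y) :
    β = β' := by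
  have ex := isEquivRel_eqvClosure x
  have ey := isEquivRel_eqvClosure y
  have hmem : (β, β') ∈ eqvClosure x ∩ eqvClosure y :=
    ⟨ex.trans (ex.symm (subset_eqvClosure x hx)) (subset_eqvClosure x hx'),
      ey.trans (subset_eqvClosure y hy) (ey.symm (subset_eqvClosure y hy'))⟩
  rw [h] at hmem
  exact hmem

end Relations

noncomputable def valencyProd {Ω : Type*} (s : Set (Ω × Ω)) : ℕ := valency s * valency (rconv s)

namespace CohCfg

variable {Ω : Type*} (X : CohCfg Ω)

lemma nonempty_of_mem {s : Set (Ω × Ω)} (hs : s ∈ X.S) : s.Nonempty :=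
  nonempty_iff_ne_empty.2 fun h => X.empty_not_mem (h ▸ hs)

variable [Fintype Ω]

lemma exists_mid_of_mem {r s t : Set (Ω × Ω)} (hr : r ∈ X.S) (hs : s ∈ X.S) (ht : t ∈ X.S)
    {p q : Ω × Ω} (hp : p ∈ t) (hq : q ∈ t) {γ : Ω} (hγr : (p.1, γ) ∈ r) (hγs : (γ, p.2) ∈ s) :
    ∃ δ, (q.1, δ) ∈ r ∧ (δ, q.2) ∈ s := by
  have hpos : 0 < {δ | (p.1, δ) ∈ r ∧ (δ, p.2) ∈ s}.ncard :=
    (ncard_pos (toFinite _)).2 ⟨γ, hγr, hγs⟩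
  rw [X.inter_const r hr s hs t ht p hp q hq] at hpos
  exact (ncard_pos (toFinite _)).1 hpos

/-- The left support of a basis relation lies in a single fibre. -/
lemma mem_of_mem_left_support {d y : Set (Ω × Ω)} (hd : d ∈ X.S) (hy : y ∈ X.S)
    (hdiag : d ⊆ rdiag Ω) {β β' γ γ' : Ω} (hβ : (β, β) ∈ d) (hγ : (β, γ) ∈ y)
    (hγ' : (β', γ') ∈ y) : (β', β') ∈ d := by
  obtain ⟨δ, hδ, -⟩ := X.exists_mid_of_mem hd hy hy hγ hγ' hβ hγ
  rwa [← show β' = δ from hdiag hδ] at hδ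

lemma ncard_row_eq {y : Set (Ω × Ω)} (hy : y ∈ X.S) {β β' γ γ' : Ω} (hγ : (β, γ) ∈ y)
    (hγ' : (β', γ') ∈ y) : {γ | (β, γ) ∈ y}.ncard = {γ | (β', γ) ∈ y}.ncard := by
  obtain ⟨d, hd, hβ⟩ := X.cover (β, β)
  have hdiag := X.diag_union d hd ⟨_, hβ, rfl⟩
  have hβ' := X.mem_of_mem_left_support hd hy hdiag hβ hγ hγ'
  -- the size of the row of `β` is the intersection number `c_{y yᵀ}^d` read at `(β, β)`
  simpa [rconv] using X.inter_const y hy (rconv y) (X.conv_mem y hy) d hd _ hβ _ hβ'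

lemma valency_eq_ncard_row {y : Set (Ω × Ω)} (hy : y ∈ X.S) {β γ : Ω} (hγ : (β, γ) ∈ y) :
    valency y = {γ | (β, γ) ∈ y}.ncard := by
  have himage : (fun α => {γ | (α, γ) ∈ y}.ncard) '' {α | ∃ γ, (α, γ) ∈ y}
      = {{γ | (β, γ) ∈ y}.ncard} := by
    refine eq_singleton_iff_unique_mem.2 ⟨⟨β, ⟨γ, hγ⟩, rfl⟩, ?_⟩
    rintro _ ⟨α, ⟨γ', hγ'⟩, rfl⟩
    exact X.ncard_row_eq hy hγ' hγ
  rw [valency, himage, csSup_singleton]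

lemma valency_pos {y : Set (Ω × Ω)} (hy : y ∈ X.S) : 0 < valency y := by
  obtain ⟨⟨β, γ⟩, hγ⟩ := X.nonempty_of_mem hy
  rw [X.valency_eq_ncard_row hy hγ]
  exact (ncard_pos (toFinite _)).2 ⟨γ, hγ⟩

/-- Uniqueness of the middle point makes the row of `x · y` a disjoint union of rows of `y`,
one for each point of a row of `x`. -/
lemma valency_rcomp {x y : Set (Ω × Ω)} (hxy : rcomp x y ∈ X.S) (hx : x ∈ X.S) (hy : y ∈ X.S)
    (hcl : eqvClosure x ∩ eqvClosure y = rdiag Ω) :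
    valency (rcomp x y) = valency x * valency y := by
  obtain ⟨⟨α, γ₀⟩, β₀, hβ₀, hγ₀⟩ := X.nonempty_of_mem hxy
  have hrow : {γ | (α, γ) ∈ rcomp x y} = ⋃ β ∈ {β | (α, β) ∈ x}, {γ | (β, γ) ∈ y} := by
    ext γ
    simp [rcomp]
  have hdisj : PairwiseDisjoint {β | (α, β) ∈ x} fun β => {γ | (β, γ) ∈ y} :=
    fun β hβ β' hβ' hne => disjoint_left.2 fun γ hγ hγ' =>
      hne (eq_of_mem_of_eqvClosure_inter_eq_rdiag hcl hβ hγ hβ' hγ')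
  have hrows : ∀ β ∈ {β | (α, β) ∈ x}, {γ | (β, γ) ∈ y}.ncard = valency y := fun β hβ => by
    obtain ⟨γ, -, hγ⟩ :=
      X.exists_mid_of_mem hxy (X.conv_mem y hy) hx hβ₀ hβ (γ := γ₀) ⟨β₀, hβ₀, hγ₀⟩ hγ₀
    exact (X.valency_eq_ncard_row hy hγ).symm
  have hfin : {β | (α, β) ∈ x}.Finite := toFinite _
  rw [X.valency_eq_ncard_row hxy ⟨β₀, hβ₀, hγ₀⟩, X.valency_eq_ncard_row hx hβ₀, hrow,
    hfin.ncard_biUnion (fun _ _ => toFinite _) hdisj, finsum_mem_congr rfl hrows,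
    finsum_mem_eq_finite_toFinset_sum _ hfin, Finset.sum_const, smul_eq_mul,
    ncard_eq_toFinset_card _ hfin]

lemma valencyProd_pos {s : Set (Ω × Ω)} (hs : s ∈ X.S) : 0 < valencyProd s :=
  Nat.mul_pos (X.valency_pos hs) (X.valency_pos (X.conv_mem s hs))

lemma valencyProd_rcomp {x y : Set (Ω × Ω)} (hxy : rcomp x y ∈ X.S) (hx : x ∈ X.S)
    (hy : y ∈ X.S) (hcl : eqvClosure x ∩ eqvClosure y = rdiag Ω) :
    valencyProd (rcomp x y) = valencyProd x * valencyProd y := by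
  have hcl' : eqvClosure (rconv y) ∩ eqvClosure (rconv x) = rdiag Ω := by
    rwa [eqvClosure_rconv, eqvClosure_rconv, inter_comm]
  have hconv := X.valency_rcomp (rconv_rcomp x y ▸ X.conv_mem _ hxy) (X.conv_mem y hy)
    (X.conv_mem x hx) hcl'
  rw [valencyProd, valencyProd, valencyProd, X.valency_rcomp hxy hx hy hcl, rconv_rcomp,
    hconv]
  ring

lemma two_le_valencyProd (hX : IsThick X) {x : Set (Ω × Ω)} (hx : x ∈ X.S)
    (hxd : Disjoint x (rdiag Ω)) : 2 ≤ valencyProd x := by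
  have h₁ := X.valency_pos hx
  have h₂ := X.valency_pos (X.conv_mem x hx)
  by_contra! h
  rw [valencyProd] at h
  exact hX x hx hxd ⟨by nlinarith, by nlinarith⟩

end CohCfg

/-- in a thick coherent configuration, every basis relation is a
composition of irredundant basis relations. -/
theorem stmt16 {Ω : Type*} [Fintype Ω] (X : CohCfg Ω) (hX : IsThick X)
    (s : Set (Ω × Ω)) (hs : s ∈ X.S) :
    ∃ l : List (Set (Ω × Ω)), l ≠ [] ∧
      (∀ r ∈ l, r ∈ X.S ∧ ¬ Redundant X r) ∧
      s = l.foldr rcomp (rdiag Ω) := by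
  induction hn : valencyProd s using Nat.strong_induction_on generalizing s with
  | _ n ih =>
  by_cases hr : Redundant X s
  · obtain ⟨x, hx, y, hy, hxd, hyd, rfl, hcl⟩ := hr
    have hprod := X.valencyProd_rcomp hs hx hy hcl
    have hx₂ := X.two_le_valencyProd hX hx hxd
    have hy₂ := X.two_le_valencyProd hX hy hyd
    obtain ⟨lx, hlx, hlxS, rfl⟩ := ih _ (by nlinarith) x hx rfl
    obtain ⟨ly, -, hlyS, rfl⟩ := ih _ (by nlinarith) y hy rfl
    refine ⟨lx ++ ly, by simp [hlx], fun r hr => ?_, (foldr_rcomp_append lx ly).symm⟩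
    exact (List.mem_append.1 hr).elim (hlxS r) (hlyS r)
  · exact ⟨[s], List.cons_ne_nil _ _, by simpa using ⟨hs, hr⟩, (rcomp_rdiag s).symm⟩
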